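/- For the state |xW_N⟩, the probability that parties 1,…,N−2 all obtain outcome +1 when measuring σ_z (i.e., the squared norm of the projection onto |0⟩ for each of the first N−2 qubits) equals 2/N, and the renormalized post-measurement state of parties N−1 and N is the maximally entangled state (|00⟩+|11⟩)/√2. -/

import Mathlib

/-!
Once the first `n` qubits are `0`, a basis string is determined by its last two bits `(a, b)`
and has weight `a + b`; the amplitude of `xW` on it is `1/√(n+2)` exactly when
`(a, b) = (0, 0)` or `(1, 1)`, and vanishes otherwise. So the projected vector is
`(1/√(n+2)) |0…0⟩ ⊗ (|00⟩ + |11⟩)`, whose squared norm is `2/(n+2)`.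
-/

/-- The state |xW_N⟩ = (1/√N)(|0⟩^{⊗N} + Σ_{j=1}^{N−1}|e_j e_N⟩) on N = n+2 qubits:
amplitude 1/√N on the all-zeros string and on each weight-2 string whose last bit
is 1. -/
noncomputable def xWState (n : ℕ) : (Fin (n + 2) → Fin 2) → ℂ := fun f =>
  if f = (fun _ => 0) ∨ (f (Fin.last (n + 1)) = 1 ∧ (∑ i, (f i : ℕ)) = 2)
  then (1 / Real.sqrt (n + 2) : ℂ) else 0

namespace Fin

theorem funext_of_lt_of_last_two {α : Type*} {n : ℕ} {f g : Fin (n + 2) → α}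
    (hlt : ∀ i : Fin (n + 2), (i : ℕ) < n → f i = g i)
    (h₀ : f ⟨n, by simp⟩ = g ⟨n, by simp⟩) (h₁ : f ⟨n + 1, by simp⟩ = g ⟨n + 1, by simp⟩) :
    f = g := by
  funext ⟨i, hi⟩
  obtain h | rfl | rfl : i < n ∨ i = n ∨ i = n + 1 := by omega
  exacts [hlt _ h, h₀, h₁]

theorem sum_eq_of_lt_eq_zero {M : Type*} [AddCommMonoid M] {n : ℕ} {f : Fin (n + 2) → M}
    (hf : ∀ i : Fin (n + 2), (i : ℕ) < n → f i = 0) :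
    ∑ i, f i = f ⟨n, by simp⟩ + f ⟨n + 1, by simp⟩ := by
  rw [Fin.sum_univ_castSucc, Fin.sum_univ_castSucc,
    Finset.sum_eq_zero fun i _ => hf _ (by simp), zero_add]
  rfl

end Fin

section

variable {n : ℕ} {f : Fin (n + 2) → Fin 2}

theorem xWState_of_lt_eq_zero (hf : ∀ i : Fin (n + 2), (i : ℕ) < n → f i = 0) :
    xWState n f = if f ⟨n, by simp⟩ = f ⟨n + 1, by simp⟩
      then (1 / Real.sqrt (n + 2) : ℂ) else 0 := by
  have hzero : f = (fun _ => 0) ↔ f ⟨n, by simp⟩ = 0 ∧ f ⟨n + 1, by simp⟩ = 0 :=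
    ⟨fun h => by simp [h], fun h => Fin.funext_of_lt_of_last_two hf h.1 h.2⟩
  have hsum : ∑ i, (f i : ℕ) = f ⟨n, by simp⟩ + f ⟨n + 1, by simp⟩ :=
    Fin.sum_eq_of_lt_eq_zero fun i hi => by simp [hf i hi]
  refine if_congr ?_ rfl rfl
  rw [hzero, hsum, show Fin.last (n + 1) = ⟨n + 1, by simp⟩ from rfl]
  generalize f ⟨n, _⟩ = a, f ⟨n + 1, _⟩ = b
  revert a b
  decide

theorem ite_xWState_eq :
    (if ∀ i : Fin (n + 2), (i : ℕ) < n → f i = 0 then xWState n f else 0 : ℂ) =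
      if (∀ i : Fin (n + 2), (i : ℕ) < n → f i = 0) ∧ f ⟨n, by simp⟩ = f ⟨n + 1, by simp⟩
      then (1 / Real.sqrt (n + 2) : ℂ) else 0 := by
  by_cases hf : ∀ i : Fin (n + 2), (i : ℕ) < n → f i = 0
  · simp only [if_pos hf, xWState_of_lt_eq_zero hf, and_iff_right hf]
  · rw [if_neg hf, if_neg fun h => hf h.1]

end

theorem card_filter_lt_eq_zero_and_eq (n : ℕ) :
    (Finset.univ.filter fun f : Fin (n + 2) → Fin 2 =>
      (∀ i : Fin (n + 2), (i : ℕ) < n → f i = 0) ∧ f ⟨n, by simp⟩ = f ⟨n + 1, by simp⟩).card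
      = 2 := by
  let g : Fin 2 → Fin (n + 2) → Fin 2 := fun a i => if (i : ℕ) < n then 0 else a
  have hg : Function.Injective g := fun a b h => by simpa [g] using congrFun h ⟨n, by simp⟩
  convert Finset.card_image_of_injective Finset.univ hg using 2
  on_goal 2 => simp
  ext f
  simp only [Finset.mem_filter, Finset.mem_univ, true_and, Finset.mem_image]
  constructor
  · rintro ⟨hf, hnn⟩
    exact ⟨f ⟨n, by simp⟩, Fin.funext_of_lt_of_last_two (fun i hi => by simp [g, hi, hf i hi])
      (by simp [g]) (by simp [g, hnn])⟩
  · rintro ⟨a, rfl⟩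
    exact ⟨fun i hi => by simp [g, hi], by simp [g]⟩

theorem norm_one_div_sqrt_sq {x : ℝ} (hx : 0 ≤ x) : ‖(1 / Real.sqrt x : ℂ)‖ ^ 2 = 1 / x := by
  rw [norm_div, norm_one, Complex.norm_real, Real.norm_of_nonneg (Real.sqrt_nonneg x), div_pow,
    one_pow, Real.sq_sqrt hx]

theorem stmt13 (n : ℕ) :
    (∑ f : Fin (n + 2) → Fin 2,
        ‖(if ∀ i : Fin (n + 2), (i : ℕ) < n → f i = 0 then xWState n f else 0 : ℂ)‖ ^ 2)
      = 2 / (n + 2) ∧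
    (fun f : Fin (n + 2) → Fin 2 =>
        (if ∀ i : Fin (n + 2), (i : ℕ) < n → f i = 0 then xWState n f else 0 : ℂ))
      = fun f =>
        if (∀ i : Fin (n + 2), (i : ℕ) < n → f i = 0) ∧
            f ⟨n, by omega⟩ = f ⟨n + 1, by omega⟩
        then (1 / Real.sqrt (n + 2) : ℂ) else 0 := by
  refine ⟨?_, funext fun f => ite_xWState_eq⟩
  simp only [ite_xWState_eq, apply_ite (fun z : ℂ => ‖z‖ ^ 2),
    norm_one_div_sqrt_sq (by positivity : (0 : ℝ) ≤ n + 2), norm_zero, zero_pow two_ne_zero]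
  rw [← Finset.sum_filter, Finset.sum_const, card_filter_lt_eq_zero_and_eq, nsmul_eq_mul]
  ring
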